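/- Leibniz rule for h-exponential divided differences: for functions f, g : ℝ → ℂ and nodes x_0, …, x_m with e_h^{ix_j} pairwise distinct, [x_0,…,x_m]_e (f·g) = ∑_{k=0}^m [x_0,…,x_k]_e f · [x_k,…,x_m]_e g. -/

import Mathlib

/-!
The h-exponential divided difference is the ordinary divided difference at the nodes
`e_h^{i x_j}`, so it suffices to prove the Leibniz rule for divided differences over any field.
By induction on the number of nodes: expanding the recursion on both sides, each summand of
`[x_1..x_{n+1}](fg) - [x_0..x_n](fg)` splits, via the recursion for `f` at the left end and for
`g` at the right end, into two terms weighted by `y_{k+1} - y_0` and `y_{n+1} - y_k`; after an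
index shift these weights add up to `y_{n+1} - y_0` in front of every term of the claimed sum.
-/

noncomputable def eh (h z : ℝ) : ℂ := Complex.exp (Complex.I * z * (Real.log (1 + h) / h))

noncomputable def dd (h : ℝ) (f : ℝ → ℂ) : (n : ℕ) → (Fin (n + 1) → ℝ) → ℂ
  | 0, x => f (x 0)
  | n + 1, x =>
      (dd h f n (fun i => x i.succ) - dd h f n (fun i => x i.castSucc)) /
        (eh h (x (Fin.last (n + 1))) - eh h (x 0))

theorem Finset.sum_range_sub_mul_shift {K : Type*} [CommRing K] (z T : ℕ → K) (n : ℕ) :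
    ∑ k ∈ range (n + 1), ((z (k + 1) - z 0) * T (k + 1) + (z (n + 1) - z k) * T k) =
      (z (n + 1) - z 0) * ∑ k ∈ range (n + 2), T k := by
  have hleft : ∑ k ∈ range (n + 1), (z (k + 1) - z 0) * T (k + 1) =
      ∑ k ∈ range (n + 2), (z k - z 0) * T k := by
    rw [sum_range_succ' _ (n + 1)]; simp
  have hright : ∑ k ∈ range (n + 1), (z (n + 1) - z k) * T k =
      ∑ k ∈ range (n + 2), (z (n + 1) - z k) * T k := by
    rw [sum_range_succ _ (n + 1)]; simp
  rw [sum_add_distrib, hleft, hright, ← sum_add_distrib, mul_sum]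
  exact sum_congr rfl fun k _ => by ring

section DivDiff

variable {K : Type*} [Field K] (y F G : ℕ → K)

/-- `divDiff y F a n` is the divided difference of `F` at the nodes `y a, …, y (a + n)`. -/
def divDiff : ℕ → ℕ → K
  | a, 0 => F a
  | a, n + 1 => (divDiff (a + 1) n - divDiff a n) / (y (a + n + 1) - y a)

theorem divDiff_succ_start {a n : ℕ} (hy : y (a + n + 1) ≠ y a) :
    divDiff y F (a + 1) n = divDiff y F a n + (y (a + n + 1) - y a) * divDiff y F a (n + 1) := by
  rw [divDiff, mul_div_cancel₀ _ (sub_ne_zero_of_ne hy)]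
  ring

theorem divDiff_mul_succ_start_sub {a n k : ℕ} (hk : k ≤ n)
    (hy : Set.InjOn y (Set.Icc a (a + n + 1))) :
    divDiff y F (a + 1) k * divDiff y G (a + k + 1) (n - k) -
        divDiff y F a k * divDiff y G (a + k) (n - k) =
      (y (a + k + 1) - y a) * (divDiff y F a (k + 1) * divDiff y G (a + k + 1) (n - k)) +
        (y (a + n + 1) - y (a + k)) * (divDiff y F a k * divDiff y G (a + k) (n - k + 1)) := by
  have hF : y (a + k + 1) ≠ y a :=
    hy.ne (by simp only [Set.mem_Icc]; omega) (by simp only [Set.mem_Icc]; omega) (by omega)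
  have hG : y (a + k + (n - k) + 1) ≠ y (a + k) :=
    hy.ne (by simp only [Set.mem_Icc]; omega) (by simp only [Set.mem_Icc]; omega) (by omega)
  rw [divDiff_succ_start y F hF, divDiff_succ_start y G hG,
    show a + k + (n - k) + 1 = a + n + 1 by omega]
  ring

theorem divDiff_mul (n : ℕ) : ∀ a, Set.InjOn y (Set.Icc a (a + n)) →
    divDiff y (F * G) a n =
      ∑ k ∈ Finset.range (n + 1), divDiff y F a k * divDiff y G (a + k) (n - k) := by
  induction n with
  | zero => intro a _; simp [divDiff]
  | succ n ih =>
    intro a hy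
    have hyn : y (a + n + 1) - y a ≠ 0 :=
      sub_ne_zero_of_ne (hy.ne (by simp only [Set.mem_Icc]; omega) (by simp) (by omega))
    rw [divDiff, ih (a + 1) (hy.mono (Set.Icc_subset_Icc (by omega) (by omega))),
      ih a (hy.mono (Set.Icc_subset_Icc le_rfl (by omega))), div_eq_iff hyn,
      ← Finset.sum_sub_distrib]
    have hshift := Finset.sum_range_sub_mul_shift (fun k => y (a + k))
      (fun k => divDiff y F a k * divDiff y G (a + k) (n + 1 - k)) n
    simp only [add_zero, ← add_assoc] at hshift
    rw [mul_comm, ← hshift]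
    refine Finset.sum_congr rfl fun k hk => ?_
    have hkn : k ≤ n := Nat.lt_succ_iff.mp (Finset.mem_range.mp hk)
    rw [← add_assoc] at hy
    rw [add_right_comm a 1 k, divDiff_mul_succ_start_sub y F G hkn hy, Nat.add_sub_add_right,
      Nat.sub_add_comm hkn]

end DivDiff

theorem dd_eq_divDiff (h : ℝ) (f : ℝ → ℂ) (X : ℕ → ℝ) (n : ℕ) :
    ∀ (a : ℕ) (w : Fin (n + 1) → ℝ), (∀ i : Fin (n + 1), w i = X (a + i)) →
      dd h f n w = divDiff (fun j => eh h (X j)) (f ∘ X) a n := by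
  induction n with
  | zero => intro a w hw; simp [dd, divDiff, hw 0]
  | succ n ih =>
    intro a w hw
    rw [dd, divDiff, ih (a + 1) _ fun i => by simp [hw i.succ, add_right_comm, add_assoc],
      ih a _ fun i => hw i.castSucc, hw (Fin.last _), hw 0]
    simp [add_assoc]

theorem dd_leibniz (h : ℝ) (m : ℕ) (x : Fin (m + 1) → ℝ)
    (hdist : Function.Injective fun j => eh h (x j)) (f g : ℝ → ℂ) :
    dd h (fun t => f t * g t) m x =
      ∑ k : Fin (m + 1),
        dd h f k (fun i : Fin (k + 1) => x (Fin.castLE (by omega) i)) *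
        dd h g (m - k) (fun i : Fin ((m - (k : ℕ)) + 1) => x ⟨k + i, by omega⟩) := by
  set X : ℕ → ℝ := fun j => if hj : j < m + 1 then x ⟨j, hj⟩ else x 0
  have hX : ∀ j (hj : j < m + 1), X j = x ⟨j, hj⟩ := fun j hj => dif_pos hj
  have hinj : Set.InjOn (fun j => eh h (X j)) (Set.Icc 0 (0 + m)) := by
    intro i hi j hj hij
    simp only [Set.mem_Icc, zero_add] at hi hj
    simp only [hX i (by omega), hX j (by omega)] at hij
    exact Fin.mk.inj (hdist hij)
  rw [dd_eq_divDiff h _ X m 0 x fun i => by rw [zero_add, hX i i.isLt],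
    show (fun t => f t * g t) ∘ X = (f ∘ X) * (g ∘ X) from rfl, divDiff_mul _ _ _ m 0 hinj,
    ← Fin.sum_univ_eq_sum_range]
  refine Finset.sum_congr rfl fun k _ => ?_
  rw [dd_eq_divDiff h f X k 0 _ fun i => by rw [zero_add, hX i (by omega)]; rfl,
    dd_eq_divDiff h g X (m - k) k _ fun i => (hX _ _).symm, zero_add]
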